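/- Let G be a graph of order n with vertex set V = {1,…,n}, let x ∈ V and let t ≥ 2 be an integer. Then (i) the number of vertices of S(G,t) ending in the letter x that have degree d(x) in S(G,t) equals n^{t−1} − d(x)ψ(t−1), and (ii) the number of vertices of S(G,t) ending in the letter x that have degree d(x)+1 in S(G,t) equals d(x)ψ(t−1). -/

import Mathlib

/-!
A word `u` of length `m + 1` ending in `x` has the `d(x)` neighbours obtained by changing its
last letter. Any other neighbour comes from the first position where the two words differ, which
forces `u = w y x⋯x` with `y ~ x`; such a `y` is unique (the letters after it equal `x`, which
is not adjacent to itself), so the degree is `d(x)` or `d(x) + 1`. Deleting the final `x`, a word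
of length `m + 2` of the form `w y x⋯x` ends either in a neighbour of `x` (`d(x) n^m` words) or
in `x` and is again of that form, so the number `c(m)` of these words satisfies
`c(m + 1) = d(x) n^m + c(m)` and `c(0) = 0`, whence `c(m) = d(x) ψ(m)`.
-/

open Finset

/-- The generalized Sierpiński graph `S(G,t)` on words of length `t` over the vertex set. -/
def sierpinskiGraph {V : Type*} (G : SimpleGraph V) (t : ℕ) :
    SimpleGraph (Fin t → V) where
  Adj u v := ∃ i : Fin t, (∀ j, j < i → u j = v j) ∧ u i ≠ v i ∧ G.Adj (u i) (v i) ∧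
      ∀ j, i < j → u j = v i ∧ v j = u i
  symm := by
    refine ⟨?_⟩
    rintro u v ⟨i, h1, h2, h3, h4⟩
    exact ⟨i, fun j hj => (h1 j hj).symm, fun h => h2 h.symm, h3.symm,
      fun j hj => ⟨(h4 j hj).2, (h4 j hj).1⟩⟩
  loopless := by
    refine ⟨?_⟩
    rintro u ⟨i, _, h2, _⟩
    exact h2 rfl

instance {V : Type*} [Fintype V] [DecidableEq V] (G : SimpleGraph V) [DecidableRel G.Adj]
    (t : ℕ) : DecidableRel (sierpinskiGraph G t).Adj := fun u v =>
  inferInstanceAs (Decidable (∃ i : Fin t, (∀ j, j < i → u j = v j) ∧ u i ≠ v i ∧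
    G.Adj (u i) (v i) ∧ ∀ j, i < j → u j = v i ∧ v j = u i))

/-- The general Randić index `R_α`. -/
noncomputable def randic {V : Type*} [Fintype V] (G : SimpleGraph V) (α : ℝ) : ℝ := by
  classical
  exact ∑ e ∈ G.edgeFinset,
    Sym2.lift ⟨fun u v => ((G.degree u : ℝ) * (G.degree v : ℝ)) ^ α,
      fun u v => by dsimp only; rw [mul_comm]⟩ e

/-- `τ(x,y)`: the number of triangles containing the adjacent vertices `x` and `y`. -/
def tau {V : Type*} [Fintype V] [DecidableEq V] (G : SimpleGraph V) [DecidableRel G.Adj]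
    (x y : V) : ℕ := (G.neighborFinset x ∩ G.neighborFinset y).card

lemma tau_comm {V : Type*} [Fintype V] [DecidableEq V] (G : SimpleGraph V) [DecidableRel G.Adj]
    (x y : V) : tau G x y = tau G y x := by
  simp [tau, Finset.inter_comm]

/-- `ψ(t) = 1 + n + ⋯ + n^{t-1}`. -/
def psi (n t : ℕ) : ℕ := ∑ i ∈ Finset.range t, n ^ i

/-- `τ(G)`: the number of triangles of `G`. -/
noncomputable def triangleCount {V : Type*} [Fintype V] (G : SimpleGraph V) : ℕ := by
  classical exact (G.cliqueFinset 3).card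

variable {V : Type*}

section Words

variable (G : SimpleGraph V)

/-- With `u = w a b⋯b`, `a ~ b` at position `i`, the word `u` has the extra neighbour
`swapWord u i = w b a⋯a` in the Sierpiński graph. -/
def IsSwapIndex {m : ℕ} (u : Fin (m + 1) → V) (i : Fin m) : Prop :=
  G.Adj (u i.castSucc) (u (Fin.last m)) ∧ ∀ j, i.castSucc < j → u j = u (Fin.last m)

instance [DecidableEq V] [DecidableRel G.Adj] {m : ℕ} (u : Fin (m + 1) → V) :
    DecidablePred (IsSwapIndex G u) := fun _ =>
  inferInstanceAs (Decidable (_ ∧ _))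

def swapWord {m : ℕ} (u : Fin (m + 1) → V) (i : Fin m) : Fin (m + 1) → V := fun j =>
  if j < i.castSucc then u j else if j = i.castSucc then u (Fin.last m) else u i.castSucc

variable {G}

theorem IsSwapIndex.unique {m : ℕ} {u : Fin (m + 1) → V} {i k : Fin m}
    (hi : IsSwapIndex G u i) (hk : IsSwapIndex G u k) : i = k := by
  rcases lt_trichotomy i k with h | h | h
  · exact absurd (hi.2 _ (Fin.castSucc_lt_castSucc_iff.2 h) ▸ hk.1) (G.loopless.irrefl _)
  · exact h
  · exact absurd (hk.2 _ (Fin.castSucc_lt_castSucc_iff.2 h) ▸ hi.1) (G.loopless.irrefl _)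

theorem exists_isSwapIndex_iff_init {m : ℕ} (u : Fin (m + 2) → V) :
    (∃ i, IsSwapIndex G u i) ↔ G.Adj (u (Fin.last m).castSucc) (u (Fin.last (m + 1))) ∨
      u (Fin.last m).castSucc = u (Fin.last (m + 1)) ∧ ∃ i, IsSwapIndex G (Fin.init u) i := by
  constructor
  · rintro ⟨i, hadj, hsuf⟩
    induction i using Fin.lastCases with
    | last => exact Or.inl hadj
    | cast i =>
      have hlast := hsuf _ (Fin.castSucc_lt_castSucc_iff.2 (Fin.castSucc_lt_last i))
      refine Or.inr ⟨hlast, i, ?_, fun j hj => ?_⟩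
      · simpa only [Fin.init, hlast] using hadj
      · simpa only [Fin.init, hlast] using hsuf _ (Fin.castSucc_lt_castSucc_iff.2 hj)
  · rintro (hadj | ⟨hlast, i, hadj, hsuf⟩)
    · refine ⟨Fin.last m, hadj, fun j hj => ?_⟩
      rw [Fin.castSucc_lt_iff_succ_le, Fin.succ_last, Fin.last_le_iff] at hj
      rw [hj]
    · refine ⟨i.castSucc, by simpa only [Fin.init, hlast] using hadj, fun j hj => ?_⟩
      induction j using Fin.lastCases with
      | last => rfl
      | cast j =>
        simpa only [Fin.init, hlast] using hsuf j (Fin.castSucc_lt_castSucc_iff.1 hj)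

theorem sierpinskiGraph_adj_iff {m : ℕ} {u v : Fin (m + 1) → V} :
    (sierpinskiGraph G (m + 1)).Adj u v ↔
      (∃ y, G.Adj (u (Fin.last m)) y ∧ Function.update u (Fin.last m) y = v) ∨
        ∃ i, IsSwapIndex G u i ∧ swapWord u i = v := by
  constructor
  · rintro ⟨i, hlt, -, hadj, hgt⟩
    induction i using Fin.lastCases with
    | last =>
      refine Or.inl ⟨v (Fin.last m), hadj, funext fun j => ?_⟩
      induction j using Fin.lastCases with
      | last => simp
      | cast j => simp [(Fin.castSucc_lt_last j).ne, hlt _ (Fin.castSucc_lt_last j)]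
    | cast i =>
      have hvi : v i.castSucc = u (Fin.last m) := (hgt _ (Fin.castSucc_lt_last i)).1.symm
      refine Or.inr ⟨i, ⟨hvi ▸ hadj, fun j hj => (hgt j hj).1.trans hvi⟩, funext fun j => ?_⟩
      unfold swapWord
      split_ifs with h₁ h₂
      · exact hlt j h₁
      · exact h₂ ▸ hvi.symm
      · exact (hgt j (lt_of_le_of_ne (not_lt.1 h₁) (Ne.symm h₂))).2.symm
  · rintro (⟨y, hy, rfl⟩ | ⟨i, ⟨hadj, hsuf⟩, rfl⟩)
    · refine ⟨Fin.last m, fun j hj => (Function.update_of_ne hj.ne _ _).symm, ?_, ?_,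
        fun j hj => absurd hj (not_lt.2 (Fin.le_last j))⟩
      · simpa using hy.ne
      · simpa using hy
    · refine ⟨i.castSucc, fun j hj => by simp [swapWord, hj], ?_, ?_, fun j hj => ⟨?_, ?_⟩⟩
      · simpa [swapWord] using hadj.ne
      · simpa [swapWord] using hadj
      · simp [swapWord, hsuf j hj]
      · simp [swapWord, hj.not_gt, hj.ne']

end Words

section Degree

variable [Fintype V] [DecidableEq V] (G : SimpleGraph V) [DecidableRel G.Adj]

theorem sierpinskiGraph_degree {m : ℕ} (u : Fin (m + 1) → V) :
    (sierpinskiGraph G (m + 1)).degree u =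
      G.degree (u (Fin.last m)) + if ∃ i, IsSwapIndex G u i then 1 else 0 := by
  have hN : (sierpinskiGraph G (m + 1)).neighborFinset u =
      (G.neighborFinset (u (Fin.last m))).image (Function.update u (Fin.last m)) ∪
        ({i | IsSwapIndex G u i} : Finset (Fin m)).image (swapWord u) := by
    ext v
    simp [sierpinskiGraph_adj_iff]
  have hdisj :
      Disjoint ((G.neighborFinset (u (Fin.last m))).image (Function.update u (Fin.last m)))
        (({i | IsSwapIndex G u i} : Finset (Fin m)).image (swapWord u)) := by
    simp only [disjoint_left, mem_image, mem_filter, mem_univ, true_and, not_exists, not_and]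
    rintro _ ⟨y, -, rfl⟩ i hi h
    have := congrFun h i.castSucc
    simp [swapWord, (Fin.castSucc_lt_last i).ne] at this
    exact hi.1.ne this.symm
  have hswap : #({i | IsSwapIndex G u i} : Finset (Fin m)) =
      if ∃ i, IsSwapIndex G u i then 1 else 0 := by
    split_ifs with h
    · obtain ⟨i, hi⟩ := h
      exact card_eq_one.2 ⟨i, eq_singleton_iff_unique_mem.2
        ⟨by simpa using hi, fun k hk => (mem_filter.1 hk).2.unique hi⟩⟩
    · simpa [filter_eq_empty_iff] using h
  rw [← SimpleGraph.card_neighborFinset_eq_degree, hN, card_union_of_disjoint hdisj,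
    card_image_of_injective _ (Function.update_injective u _),
    SimpleGraph.card_neighborFinset_eq_degree,
    card_image_of_injOn fun i hi k hk _ => (mem_filter.1 hi).2.unique (mem_filter.1 hk).2, hswap]

end Degree

section Counting

variable [Fintype V] [DecidableEq V]

theorem card_filter_last_mem_and_init {m : ℕ} (s : Finset V) (p : (Fin m → V) → Prop)
    [DecidablePred p] :
    #{u : Fin (m + 1) → V | u (Fin.last m) ∈ s ∧ p (Fin.init u)} = #s * #{w | p w} := by
  rw [← card_product]
  exact card_equiv (Fin.snocEquiv fun _ => V).symm (by simp)

variable (G : SimpleGraph V) [DecidableRel G.Adj]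

theorem card_filter_last_eq_and_exists_isSwapIndex (x : V) : ∀ m : ℕ,
    #{u : Fin (m + 1) → V | u (Fin.last m) = x ∧ ∃ i, IsSwapIndex G u i} =
      G.degree x * psi (Fintype.card V) m
  | 0 => by simp [psi]
  | m + 1 => by
    calc #{u : Fin (m + 2) → V | u (Fin.last (m + 1)) = x ∧ ∃ i, IsSwapIndex G u i}
        = #{u : Fin (m + 2) → V | u (Fin.last (m + 1)) ∈ ({x} : Finset V) ∧
            (G.Adj (Fin.init u (Fin.last m)) x ∨
              Fin.init u (Fin.last m) = x ∧ ∃ i, IsSwapIndex G (Fin.init u) i)} := by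
          refine congrArg card (filter_congr fun u _ => ?_)
          rw [mem_singleton, exists_isSwapIndex_iff_init]
          exact and_congr_right fun hu => by rw [hu]; rfl
      _ = #{w : Fin (m + 1) → V | G.Adj (w (Fin.last m)) x ∨
            w (Fin.last m) = x ∧ ∃ i, IsSwapIndex G w i} := by
          rw [card_filter_last_mem_and_init {x} fun w : Fin (m + 1) → V =>
            G.Adj (w (Fin.last m)) x ∨ w (Fin.last m) = x ∧ ∃ i, IsSwapIndex G w i,
            card_singleton, one_mul]
      _ = #{w : Fin (m + 1) → V | G.Adj (w (Fin.last m)) x} +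
          #{w : Fin (m + 1) → V | w (Fin.last m) = x ∧ ∃ i, IsSwapIndex G w i} := by
          rw [filter_or,
            card_union_of_disjoint (disjoint_filter.2 fun w _ hadj h => G.ne_of_adj hadj h.1)]
      _ = G.degree x * psi (Fintype.card V) (m + 1) := by
          have hadj : #{w : Fin (m + 1) → V | G.Adj (w (Fin.last m)) x} =
              G.degree x * Fintype.card V ^ m := by
            simpa [G.adj_comm x] using
              card_filter_last_mem_and_init (G.neighborFinset x) fun _ : Fin m → V => True
          rw [hadj, card_filter_last_eq_and_exists_isSwapIndex x m, psi, psi, sum_range_succ]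
          ring

end Counting

theorem sierpinski_vertex_degree_count {n : ℕ} (G : SimpleGraph (Fin n))
    [DecidableRel G.Adj] (x : Fin n) (t : ℕ) (ht : 2 ≤ t) :
    (Finset.univ.filter fun u : Fin t → Fin n =>
        u ⟨t - 1, by omega⟩ = x ∧ (sierpinskiGraph G t).degree u = G.degree x).card =
      n ^ (t - 1) - G.degree x * psi n (t - 1) ∧
    (Finset.univ.filter fun u : Fin t → Fin n =>
        u ⟨t - 1, by omega⟩ = x ∧ (sierpinskiGraph G t).degree u = G.degree x + 1).card =
      G.degree x * psi n (t - 1) := by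
  obtain ⟨m, rfl⟩ : ∃ m, t = m + 1 := ⟨t - 1, by omega⟩
  rw [show (⟨m + 1 - 1, by omega⟩ : Fin (m + 1)) = Fin.last m from Fin.ext (by simp),
    Nat.add_sub_cancel]
  have hdeg (u : Fin (m + 1) → Fin n) (hu : u (Fin.last m) = x) :
      (sierpinskiGraph G (m + 1)).degree u =
        G.degree x + if ∃ i, IsSwapIndex G u i then 1 else 0 := by
    rw [sierpinskiGraph_degree, hu]
  have hswap := card_filter_last_eq_and_exists_isSwapIndex G x m
  rw [Fintype.card_fin] at hswap
  have hall : #{u : Fin (m + 1) → Fin n | u (Fin.last m) = x} = n ^ m := by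
    simpa using card_filter_last_mem_and_init {x} fun _ : Fin m → Fin n => True
  have hsplit := card_filter_add_card_filter_not
    (s := {u : Fin (m + 1) → Fin n | u (Fin.last m) = x}) fun u => ∃ i, IsSwapIndex G u i
  rw [filter_filter, filter_filter, hall, hswap] at hsplit
  constructor
  · rw [filter_congr (q := fun u => u (Fin.last m) = x ∧ ¬∃ i, IsSwapIndex G u i)
      fun u _ => and_congr_right fun hu => by simp [hdeg u hu]]
    omega
  · rw [filter_congr (q := fun u => u (Fin.last m) = x ∧ ∃ i, IsSwapIndex G u i)
      fun u _ => and_congr_right fun hu => by simp [hdeg u hu], hswap]
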